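/- arXiv:2106.14813 — 6 statements merged into one kernel-verified Lean document; each statement's English description precedes it below -/
import Mathlib

section
/- Let d_1 ≤ d_2 ≤ ... ≤ d_n be positive integers, all of the form c·2^{ℓ_k} for a fixed positive integer c (i.e., d_k = c·2^{ℓ_k} with ℓ_k ≥ 0, and the ℓ_k nondecreasing). If the sum of reciprocals 1/d_1 + ... + 1/d_n > 1, then there exists m with 1 ≤ m < n such that 1/d_1 + ... + 1/d_m = 1 exactly. -/
/-!
Let `m` be the last index before the partial sums `S_m = 1/d_1 + ⋯ + 1/d_m` first exceed `1`.
Every `d_k` with `k ≤ m` divides `d_m`, so `d_m · S_m` is an integer; it is at most `d_m` and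
exceeds `d_m (1 - 1/d_{m+1}) ≥ d_m - 1`, hence equals `d_m`.
-/

open Finset

theorem Nat.exists_le_lt_succ_of_le_of_lt {α : Type*} [LinearOrder α] (f : ℕ → α) {a : α}
    (h0 : f 0 ≤ a) {n : ℕ} (hn : a < f n) : ∃ m < n, f m ≤ a ∧ a < f (m + 1) := by
  induction n with
  | zero => exact absurd h0 hn.not_ge
  | succ n ih =>
    by_cases hfn : f n ≤ a
    · exact ⟨n, n.lt_succ_self, hfn, hn⟩
    · obtain ⟨m, hmn, hm⟩ := ih (not_le.mp hfn)
      exact ⟨m, hmn.trans n.lt_succ_self, hm⟩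

theorem Nat.mul_two_pow_dvd_of_le {c a b : ℕ} (hc : 0 < c) (h : c * 2 ^ a ≤ c * 2 ^ b) :
    c * 2 ^ a ∣ c * 2 ^ b :=
  mul_dvd_mul_left c <| pow_dvd_pow 2 <|
    (Nat.pow_le_pow_iff_right (by norm_num)).mp (Nat.le_of_mul_le_mul_left h hc)

theorem sum_one_div_eq_one_of_dvd {ι : Type*} (s : Finset ι) (d : ι → ℕ) {D : ℕ} (hD : 0 < D)
    (hdvd : ∀ i ∈ s, d i ∣ D) (hle : ∑ i ∈ s, (1 : ℝ) / d i ≤ 1)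
    (hlt : 1 < ∑ i ∈ s, (1 : ℝ) / d i + 1 / D) : ∑ i ∈ s, (1 : ℝ) / d i = 1 := by
  set S := ∑ i ∈ s, (1 : ℝ) / d i
  have hDpos : (0 : ℝ) < D := by exact_mod_cast hD
  have hN : ((∑ i ∈ s, D / d i : ℕ) : ℝ) = D * S := by
    rw [Finset.mul_sum]
    push_cast
    refine Finset.sum_congr rfl fun i hi => ?_
    rw [Nat.cast_div_charZero (hdvd i hi), mul_one_div]
  have hN_le : ∑ i ∈ s, D / d i ≤ D := by
    have : D * S ≤ D := mul_le_of_le_one_right hDpos.le hle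
    exact_mod_cast hN ▸ this
  have hN_gt : D < ∑ i ∈ s, D / d i + 1 := by
    have : (D : ℝ) < D * S + 1 := by
      have := mul_lt_mul_of_pos_left hlt hDpos
      rwa [mul_add, mul_one_div_cancel hDpos.ne', mul_one] at this
    exact_mod_cast hN ▸ this
  have hDS : (D : ℝ) * S = D * 1 := by
    rw [← hN, mul_one]
    exact_mod_cast le_antisymm hN_le (by omega)
  exact mul_left_cancel₀ hDpos.ne' hDS

theorem stmt2_general (n c : ℕ) (hc : 0 < c) (ℓ : ℕ → ℕ) (d : ℕ → ℕ)
    (hd : ∀ k < n, d k = c * 2 ^ ℓ k)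
    (hmono : ∀ j k, j ≤ k → k < n → d j ≤ d k)
    (hsum : 1 < ∑ k ∈ Finset.range n, (1 : ℝ) / d k) :
    ∃ m : ℕ, 1 ≤ m ∧ m < n ∧ ∑ k ∈ Finset.range m, (1 : ℝ) / d k = 1 := by
  have hd_pos : ∀ k < n, 0 < d k := fun k hk => hd k hk ▸ by positivity
  obtain ⟨m, hmn, hle, hlt⟩ := Nat.exists_le_lt_succ_of_le_of_lt
    (fun t => ∑ k ∈ range t, (1 : ℝ) / d k) (by simp) hsum
  rw [sum_range_succ] at hlt
  have hm : 1 ≤ m := by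
    by_contra! h0
    obtain rfl : m = 0 := by omega
    have : (1 : ℝ) / d 0 ≤ 1 := div_le_one_of_le₀ (by exact_mod_cast hd_pos 0 hmn) (by positivity)
    simp only [range_zero, sum_empty, zero_add] at hlt
    linarith
  refine ⟨m, hm, hmn, sum_one_div_eq_one_of_dvd _ d (hd_pos (m - 1) (by omega)) ?_ hle ?_⟩
  · intro k hk
    have hkm : k < m := mem_range.mp hk
    have hdk := hmono k (m - 1) (by omega) (by omega)
    rw [hd k (by omega), hd (m - 1) (by omega)] at hdk ⊢
    exact Nat.mul_two_pow_dvd_of_le hc hdk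
  · have : (1 : ℝ) / d m ≤ 1 / d (m - 1) := one_div_le_one_div_of_le
      (by exact_mod_cast hd_pos (m - 1) (by omega)) (by exact_mod_cast hmono _ _ (by omega) hmn)
    linarith

/-- If `d_1 ≤ … ≤ d_n` are all of the form `c·2^ℓ` and the sum of reciprocals exceeds 1,
then some proper partial sum of reciprocals is exactly 1. -/
theorem stmt2 (n c : ℕ) (hc : 0 < c) (hn : 1 ≤ n) (ℓ : ℕ → ℕ) (d : ℕ → ℕ)
    (hd : ∀ k < n, d k = c * 2 ^ ℓ k)
    (hmono : ∀ j k, j ≤ k → k < n → d j ≤ d k)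
    (hsum : 1 < ∑ k ∈ Finset.range n, (1 : ℝ) / d k) :
    ∃ m : ℕ, 1 ≤ m ∧ m < n ∧ ∑ k ∈ Finset.range m, (1 : ℝ) / d k = 1 :=
  stmt2_general n c hc ℓ d hd hmono hsum
end

section
/- Let d_1, ..., d_n be positive integers, each a power of 2, such that Σ_k 1/d_k ≤ 1. Then there exists a function t : {1,...,n} → ℤ with t_k ∈ (-d_k, 0] for each k, such that for every integer time s ≥ 1, at most one index k satisfies s ≡ t_k (mod d_k). In other words, the arithmetic progressions { t_k + m·d_k : m ∈ ℤ_+ } restricted to positive integers are pairwise disjoint. -/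
/-!
Periods forming a divisibility chain can be scheduled greedily in increasing order. When an arm
of the largest period `D` is added, each earlier arm of period `d ∣ D` occupies exactly `D / d`
residues modulo `D`, and the reciprocal-sum bound gives `∑ D / d ≤ D - 1`, so some residue modulo
`D` is still free. Powers of two always form a divisibility chain.
-/

open Finset

theorem card_Ioc_filter_dvd_sub_of_dvd (a v : ℤ) {d D : ℕ} (hd : 0 < d) (hdD : d ∣ D) :
    #{x ∈ Ioc (a - D) a | (d : ℤ) ∣ x - v} = D / d := by
  obtain ⟨m, rfl⟩ := hdD
  have hclass : {x ∈ Ioc (a - (d * m : ℕ)) a | (d : ℤ) ∣ x - v} =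
      {x ∈ Ioc (a - (d * m : ℕ)) a | x ≡ v [ZMOD d]} := by
    simp only [Int.modEq_comm (a := _) (b := v), Int.modEq_iff_dvd]
  rw [hclass, Nat.mul_div_cancel_left _ hd, ← Int.natCast_inj,
    Int.Ioc_filter_modEq_card _ _ (by exact_mod_cast hd)]
  push_cast
  rw [show ((a : ℚ) - d * m - v) / d = (a - v) / d - m by field_simp; ring, Int.floor_sub_natCast]
  omega

theorem exists_mem_Ioc_forall_not_dvd_sub {ι : Type*} (s : Finset ι) (d : ι → ℕ) (t : ι → ℤ)
    (D : ℕ) (hdvd : ∀ i ∈ s, d i ∣ D) (hlt : ∑ i ∈ s, D / d i < D) :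
    ∃ r ∈ Ioc (-(D : ℤ)) 0, ∀ i ∈ s, ¬ (d i : ℤ) ∣ r - t i := by
  classical
  have hD : 0 < D := by omega
  let occupied := s.biUnion fun i => {x ∈ Ioc (-(D : ℤ)) 0 | (d i : ℤ) ∣ x - t i}
  have hcard : #occupied < #(Ioc (-(D : ℤ)) 0) := by
    calc #occupied ≤ ∑ i ∈ s, #{x ∈ Ioc (-(D : ℤ)) 0 | (d i : ℤ) ∣ x - t i} := card_biUnion_le
      _ = ∑ i ∈ s, D / d i := by
        refine sum_congr rfl fun i hi => ?_
        simpa using card_Ioc_filter_dvd_sub_of_dvd 0 (t i) (Nat.pos_of_dvd_of_pos (hdvd i hi) hD)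
          (hdvd i hi)
      _ < #(Ioc (-(D : ℤ)) 0) := by simpa using hlt
  obtain ⟨r, hr, hfree⟩ := exists_mem_notMem_of_card_lt_card hcard
  exact ⟨r, hr, fun i hi hri => hfree (mem_biUnion.2 ⟨i, hi, mem_filter.2 ⟨hr, hri⟩⟩)⟩

theorem sum_div_lt_of_one_div_add_sum_one_div_le {ι : Type*} (s : Finset ι) (d : ι → ℕ) {D : ℕ}
    (hD : 0 < D) (hdvd : ∀ i ∈ s, d i ∣ D) (hsum : 1 / (D : ℝ) + ∑ i ∈ s, 1 / (d i : ℝ) ≤ 1) :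
    ∑ i ∈ s, D / d i < D := by
  have hcast : ((∑ i ∈ s, D / d i : ℕ) : ℝ) = D * ∑ i ∈ s, 1 / (d i : ℝ) := by
    rw [Nat.cast_sum, mul_sum]
    refine sum_congr rfl fun i hi => ?_
    have hdi : (d i : ℝ) ≠ 0 := by
      exact_mod_cast (Nat.pos_of_dvd_of_pos (hdvd i hi) hD).ne'
    rw [Nat.cast_div (hdvd i hi) hdi, mul_one_div]
  have hDr : (0 : ℝ) < D := by exact_mod_cast hD
  have hle : D * ∑ i ∈ s, 1 / (d i : ℝ) ≤ D - 1 := by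
    calc D * ∑ i ∈ s, 1 / (d i : ℝ) ≤ D * (1 - 1 / D) := by gcongr; linarith
      _ = D - 1 := by field_simp
  exact_mod_cast (hcast ▸ hle).trans_lt (sub_one_lt _)

theorem exists_offsets_pairwiseDisjoint_of_dvd_chain {ι : Type*} (s : Finset ι) (d : ι → ℕ)
    (hpos : ∀ i ∈ s, 0 < d i) (hchain : ∀ i ∈ s, ∀ j ∈ s, d i ∣ d j ∨ d j ∣ d i)
    (hsum : ∑ i ∈ s, 1 / (d i : ℝ) ≤ 1) :
    ∃ t : ι → ℤ, (∀ i ∈ s, -(d i : ℤ) < t i ∧ t i ≤ 0) ∧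
      (s : Set ι).PairwiseDisjoint fun i => {x : ℤ | (d i : ℤ) ∣ x - t i} := by
  classical
  induction s using Finset.induction_on_max_value d with
  | empty => exact ⟨0, by simp, by simp⟩
  | insert j s hj hmax ih =>
    rw [sum_insert hj] at hsum
    have hdvd : ∀ i ∈ s, d i ∣ d j := by
      intro i hi
      rcases hchain i (mem_insert_of_mem hi) j (mem_insert_self j s) with h | h
      · exact h
      · rw [Nat.le_antisymm (hmax i hi) (Nat.le_of_dvd (hpos i (mem_insert_of_mem hi)) h)]
    obtain ⟨t, ht, hdisj⟩ := ih (fun i hi => hpos i (mem_insert_of_mem hi))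
      (fun i hi k hk => hchain i (mem_insert_of_mem hi) k (mem_insert_of_mem hk))
      ((le_add_of_nonneg_left (by positivity)).trans hsum)
    obtain ⟨r, hr, hfree⟩ := exists_mem_Ioc_forall_not_dvd_sub s d t (d j) hdvd
      (sum_div_lt_of_one_div_add_sum_one_div_le s d (hpos j (mem_insert_self j s)) hdvd hsum)
    have hupd : ∀ i ∈ s, Function.update t j r i = t i := fun i hi =>
      Function.update_of_ne (ne_of_mem_of_not_mem hi hj) _ _
    refine ⟨Function.update t j r, fun i hi => ?_, ?_⟩
    · rcases mem_insert.1 hi with rfl | hi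
      · simpa using hr
      · simpa [hupd i hi] using ht i hi
    · rw [coe_insert]
      refine (hdisj.mono_on fun i hi => by simp [hupd i hi]).insert fun i hi _ => ?_
      refine Set.disjoint_left.2 fun x hxj hxi => ?_
      simp only [Set.mem_ofPred_eq, Function.update_self, hupd i hi] at hxj hxi
      exact hfree i hi <| by
        simpa using dvd_sub hxi ((Int.natCast_dvd_natCast.2 (hdvd i hi)).trans hxj)

/-- If all periods are powers of 2 with reciprocals summing to at most 1, then there exist
offsets `t k ∈ (-d k, 0]` such that no two arithmetic progressions ever collide at a
positive time: a feasible 1-PPP exists. -/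
theorem stmt3 (n : ℕ) (d : Fin n → ℕ) (hpow : ∀ k, ∃ ℓ : ℕ, d k = 2 ^ ℓ)
    (hsum : ∑ k, (1 : ℝ) / d k ≤ 1) :
    ∃ t : Fin n → ℤ, (∀ k, -(d k : ℤ) < t k ∧ t k ≤ 0) ∧
      ∀ s : ℤ, 1 ≤ s → ∀ k k' : Fin n,
        (d k : ℤ) ∣ (s - t k) → (d k' : ℤ) ∣ (s - t k') → k = k' := by
  have hpos : ∀ k ∈ univ, 0 < d k := fun k _ => by
    obtain ⟨ℓ, hℓ⟩ := hpow k
    exact hℓ ▸ Nat.two_pow_pos ℓ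
  have hchain : ∀ k ∈ univ, ∀ k' ∈ univ, d k ∣ d k' ∨ d k' ∣ d k := fun k _ k' _ => by
    obtain ⟨ℓ, hℓ⟩ := hpow k
    obtain ⟨ℓ', hℓ'⟩ := hpow k'
    rw [hℓ, hℓ']
    exact (le_total ℓ ℓ').imp (Nat.pow_dvd_pow 2) (Nat.pow_dvd_pow 2)
  obtain ⟨t, ht, hdisj⟩ := exists_offsets_pairwiseDisjoint_of_dvd_chain univ d hpos hchain hsum
  exact ⟨t, fun k => ht k (mem_univ k), fun s _ k k' hk hk' =>
    hdisj.elim_set (by simp) (by simp) s hk hk'⟩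
end

section
/- Consider two arms with K=1, where arm 1 has constant expected reward R_1(d) = r for all d ≥ 1, and arm 2 has R_2(d) = 1 if d = 1 and R_2(d) = R if d > 1, with 0 < r < 1 < R. The greedy policy (always pulling the arm with highest current expected reward) pulls arm 2 every period and collects total reward T over horizon T, while the alternating policy (pulling arms 1 and 2 in turn) collects at least ((R+r)/2)·(T-1). Consequently, the ratio of greedy's reward to the optimum tends to 0 as R → ∞. -/
/-! The greedy policy always pulls arm 2, which therefore never recovers and pays `R_2(1) = 1`
per step, i.e. `T` in total. Alternating, arm 2 is idle for two steps at every even time and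
pays `R`, so the alternating policy earns about `R T / 2`, which dominates `T` once `R` is
large compared with `T`. -/

/-- The last time strictly before `t` (and ≥ 1) at which policy `π` pulled arm `b`;
`0` if there is no such time. -/
def prevPull (π : ℕ → Bool) (b : Bool) : ℕ → ℕ
  | 0 => 0
  | t + 1 => if 1 ≤ t ∧ π t = b then t else prevPull π b t

/-- Total reward over horizon `T` of the two-arm policy `π` (`false` = arm 1 with
recovery function `f`, `true` = arm 2 with recovery function `g`): at each time
`t ∈ [1,T]` the pulled arm yields its recovery function evaluated at the idle time. -/
def totalReward (f g : ℕ → ℝ) (π : ℕ → Bool) (T : ℕ) : ℝ :=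
  ∑ t ∈ Finset.Icc 1 T,
    (if π t then g (t - prevPull π true t) else f (t - prevPull π false t))

lemma prevPull_le (π : ℕ → Bool) (b : Bool) : ∀ t, prevPull π b t ≤ t - 1
  | 0 => le_rfl
  | t + 1 => by
    have := prevPull_le π b t
    simp only [prevPull]
    split <;> omega

lemma prevPull_succ_of_pull {π : ℕ → Bool} {b : Bool} {t : ℕ} (ht : 1 ≤ t) (hπ : π t = b) :
    prevPull π b (t + 1) = t := by
  simp [prevPull, ht, hπ]

lemma prevPull_succ_of_not_pull {π : ℕ → Bool} {b : Bool} {t : ℕ} (hπ : π t ≠ b) :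
    prevPull π b (t + 1) = prevPull π b t := by
  simp [prevPull, hπ]

lemma prevPull_const_true (t : ℕ) : prevPull (fun _ => true) true t = t - 1 := by
  rcases t with _ | _ | t
  · rfl
  · rfl
  · exact prevPull_succ_of_pull (by omega) rfl

lemma prevPull_alternating_of_even {t : ℕ} (h2 : 2 ≤ t) (he : t % 2 = 0) :
    prevPull (fun s => decide (s % 2 = 0)) true t = t - 2 := by
  obtain ⟨u, rfl⟩ : ∃ u, t = u + 2 := ⟨t - 2, by omega⟩
  rw [prevPull_succ_of_not_pull (by simp only [ne_eq, decide_eq_true_eq]; omega)]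
  rcases u with _ | u
  · rfl
  · exact prevPull_succ_of_pull (by omega) (by simp only [decide_eq_true_eq]; omega)

lemma totalReward_const_true (f g : ℕ → ℝ) (T : ℕ) :
    totalReward f g (fun _ => true) T = T * g 1 := by
  have hidle : ∀ t ∈ Finset.Icc 1 T, t - prevPull (fun _ => true) true t = 1 := by
    intro t ht
    rw [prevPull_const_true]
    have := (Finset.mem_Icc.mp ht).1
    omega
  simp only [totalReward, if_true]
  rw [Finset.sum_congr rfl fun t ht => by rw [hidle t ht], Finset.sum_const, Nat.card_Icc,
    nsmul_eq_mul, Nat.add_sub_cancel]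

lemma sum_Icc_ite_mod_two (a b : ℝ) (T : ℕ) :
    ∑ t ∈ Finset.Icc 1 T, (if t % 2 = 0 then a else b)
      = a * (T / 2 : ℕ) + b * ((T + 1) / 2 : ℕ) := by
  induction T with
  | zero => simp
  | succ n ih =>
    rw [Finset.sum_Icc_succ_top (by omega), ih]
    by_cases he : (n + 1) % 2 = 0
    · rw [if_pos he, show (n + 1) / 2 = n / 2 + 1 by omega,
        show (n + 1 + 1) / 2 = n / 2 + 1 by omega]
      push_cast
      ring
    · rw [if_neg he, show (n + 1) / 2 = n / 2 by omega,
        show (n + 1 + 1) / 2 = n / 2 + 1 by omega]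
      push_cast
      ring

lemma totalReward_alternating {f g : ℕ → ℝ} {r : ℝ} (hf : ∀ d, 1 ≤ d → f d = r) (T : ℕ) :
    totalReward f g (fun t => decide (t % 2 = 0)) T
      = g 2 * (T / 2 : ℕ) + r * ((T + 1) / 2 : ℕ) := by
  rw [totalReward, ← sum_Icc_ite_mod_two]
  refine Finset.sum_congr rfl fun t ht => ?_
  have ht1 := (Finset.mem_Icc.mp ht).1
  by_cases he : t % 2 = 0
  · rw [if_pos (decide_eq_true he), if_pos he, prevPull_alternating_of_even (by omega) he]
    congr 1
    omega
  · have := prevPull_le (fun t => decide (t % 2 = 0)) false t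
    rw [if_neg (by simpa using he), if_neg he, hf _ (by omega)]

theorem stmt6_general (r : ℝ) (hr : 0 < r)
    (f : ℕ → ℝ) (g : ℝ → ℕ → ℝ)
    (hf : ∀ d, 1 ≤ d → f d = r)
    (hg1 : ∀ R : ℝ, g R 1 = 1) (hg : ∀ R : ℝ, ∀ d, 2 ≤ d → g R d = R) :
    (∀ R : ℝ, 1 < R → ∀ T : ℕ, totalReward f (g R) (fun _ => true) T = T) ∧
    (∀ R : ℝ, 1 < R → ∀ T : ℕ, 1 ≤ T →
      ((R + r) / 2) * ((T : ℝ) - 1) ≤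
        totalReward f (g R) (fun t => decide (t % 2 = 0)) T) ∧
    (∀ T : ℕ, 2 ≤ T → ∀ ε : ℝ, 0 < ε → ∃ R₀ : ℝ, 1 < R₀ ∧ ∀ R : ℝ, R₀ ≤ R →
      totalReward f (g R) (fun _ => true) T ≤
        ε * totalReward f (g R) (fun t => decide (t % 2 = 0)) T) := by
  have hgreedy (R : ℝ) (T : ℕ) : totalReward f (g R) (fun _ => true) T = T := by
    rw [totalReward_const_true, hg1, mul_one]
  have halt (R : ℝ) (T : ℕ) : totalReward f (g R) (fun t => decide (t % 2 = 0)) T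
      = R * (T / 2 : ℕ) + r * ((T + 1) / 2 : ℕ) := by
    rw [totalReward_alternating hf, hg R 2 le_rfl]
  refine ⟨fun R _ T => hgreedy R T, fun R hR T _ => ?_, fun T hT ε hε => ?_⟩
  · have hfloor : (T : ℝ) - 1 ≤ 2 * (T / 2 : ℕ) := by
      rw [sub_le_iff_le_add]; exact_mod_cast (show T ≤ 2 * (T / 2) + 1 by omega)
    have hceil : (T : ℝ) - 1 ≤ 2 * ((T + 1) / 2 : ℕ) := by
      rw [sub_le_iff_le_add]; exact_mod_cast (show T ≤ 2 * ((T + 1) / 2) + 1 by omega)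
    rw [halt]
    nlinarith
  · refine ⟨max 2 (T / ε), by simp, fun R hR => ?_⟩
    have hRpos : 0 < R := by linarith [le_max_left 2 (T / ε)]
    have hTR : (T : ℝ) ≤ ε * R := (div_le_iff₀' hε).mp ((le_max_right _ _).trans hR)
    have hhalf : (1 : ℝ) ≤ (T / 2 : ℕ) := by exact_mod_cast (show 1 ≤ T / 2 by omega)
    calc (totalReward f (g R) (fun _ => true) T) = T := hgreedy R T
      _ ≤ ε * (R * (T / 2 : ℕ)) := by
        grw [hTR]; gcongr; exact le_mul_of_one_le_right hRpos.le hhalf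
      _ ≤ ε * totalReward f (g R) (fun t => decide (t % 2 = 0)) T := by
        rw [halt]; gcongr; exact le_add_of_nonneg_right (by positivity)

/-- With `R_1(d) = r < 1` and `R_2(1) = 1`, `R_2(d) = R` for `d ≥ 2`, the greedy policy
(always pulling arm 2) collects exactly `T`, the alternating policy collects at least
`((R+r)/2)(T-1)`, and the ratio of greedy to alternating tends to 0 as `R → ∞`. -/
theorem stmt6 (r : ℝ) (hr : 0 < r) (hr1 : r < 1)
    (f : ℕ → ℝ) (g : ℝ → ℕ → ℝ)
    (hf : ∀ d, 1 ≤ d → f d = r)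
    (hg1 : ∀ R : ℝ, g R 1 = 1) (hg : ∀ R : ℝ, ∀ d, 2 ≤ d → g R d = R) :
    (∀ R : ℝ, 1 < R → ∀ T : ℕ, totalReward f (g R) (fun _ => true) T = T) ∧
    (∀ R : ℝ, 1 < R → ∀ T : ℕ, 1 ≤ T →
      ((R + r) / 2) * ((T : ℝ) - 1) ≤
        totalReward f (g R) (fun t => decide (t % 2 = 0)) T) ∧
    (∀ T : ℕ, 2 ≤ T → ∀ ε : ℝ, 0 < ε → ∃ R₀ : ℝ, 1 < R₀ ∧ ∀ R : ℝ, R₀ ≤ R →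
      totalReward f (g R) (fun _ => true) T ≤
        ε * totalReward f (g R) (fun t => decide (t % 2 = 0)) T) :=
  stmt6_general r hr f g hf hg1 hg
end

section
/- Fix ℓ ≥ 0, and consider the two-arm instance with K=1: R_1(d) = 1 for all d ≥ 1, and R_2(d) = (2^ℓ + 1)·𝟙{d ≥ 2^ℓ + 1}. The schedule pulling arm 2 once every 2^ℓ+1 periods and arm 1 in all remaining periods achieves long-run average reward 2 - 1/(2^ℓ+1). Moreover, any 1-PPP with both periods d_1, d_2 in D_a ∪ {1, +∞} for some fixed a ≥ 1 has long-run average reward 1/d_1 + R_2(d_2)/d_2 ≤ 1 + 1/(2^ℓ+1). Hence as ℓ → ∞, the ratio of the best such PPP to the optimum tends to 1/2. -/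
/-!
Both periods have the same odd part `c = 2a - 1`, say `d₁ = c·2^m₁` and `d₂ = c·2^m₂`.
If `c ≥ 2`, then `d₂`, a multiple of `2^m₂` exceeding `2^ℓ`, is at least `2^ℓ + 2^m₂`, and
`1/d₁ ≤ 1/c = 2^m₂/d₂`; so the reward is at most `(2^m₂ + 2^ℓ + 1)/d₂ ≤ 1 + 1/d₂`.
If `c = 1` both periods are powers of two, so `d₁ ≥ 2` and `d₂ ≥ 2^(ℓ+1)`, and the reward is at
most `1/2 + (2^ℓ + 1)/2^(ℓ+1) = 1 + 1/2^(ℓ+1)`.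
-/

/-- `D_a = {(2a-1)·2^m : m ≥ 0}`. -/
def Ds (a : ℕ) : Set ℕ := {d | ∃ m : ℕ, d = (2 * a - 1) * 2 ^ m}

open Filter Topology

theorem Nat.two_pow_add_two_pow_le_mul {ℓ m c : ℕ} (hc : 2 ≤ c) (h : 2 ^ ℓ < c * 2 ^ m) :
    2 ^ ℓ + 2 ^ m ≤ c * 2 ^ m := by
  rcases le_or_gt m ℓ with hm | hm
  · obtain ⟨k, rfl⟩ := Nat.exists_eq_add_of_le hm
    rw [pow_add, mul_comm] at h ⊢
    calc 2 ^ k * 2 ^ m + 2 ^ m = (2 ^ k + 1) * 2 ^ m := by ring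
      _ ≤ c * 2 ^ m := Nat.mul_le_mul_right _ (Nat.lt_of_mul_lt_mul_right h)
  · calc 2 ^ ℓ + 2 ^ m ≤ 2 * 2 ^ m := by
          rw [two_mul]; gcongr; exact one_le_two
      _ ≤ c * 2 ^ m := by gcongr

theorem one_div_two_pow_add_div_two_pow_le {ℓ m₁ m₂ : ℕ} (h₁ : 2 ≤ 2 ^ m₁) (h₂ : 2 ^ ℓ < 2 ^ m₂) :
    (1 : ℝ) / 2 ^ m₁ + (2 ^ ℓ + 1) / 2 ^ m₂ ≤ 1 + 1 / (2 ^ ℓ + 1) := by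
  have hm₂ : ℓ + 1 ≤ m₂ := Nat.pow_lt_pow_iff_right one_lt_two |>.mp h₂
  have hfirst : (1 : ℝ) / 2 ^ m₁ ≤ 1 / 2 := by gcongr; exact_mod_cast h₁
  have hsecond : ((2 : ℝ) ^ ℓ + 1) / 2 ^ m₂ ≤ (2 ^ ℓ + 1) / 2 ^ (ℓ + 1) := by
    gcongr; exact one_le_two
  have hsplit : ((2 : ℝ) ^ ℓ + 1) / 2 ^ (ℓ + 1) = 1 / 2 + 1 / 2 ^ (ℓ + 1) := by
    rw [pow_succ]; field_simp
  have htail : (1 : ℝ) / 2 ^ (ℓ + 1) ≤ 1 / (2 ^ ℓ + 1) := by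
    gcongr; rw [pow_succ, mul_two]; gcongr; exact one_le_pow₀ one_le_two
  linarith

theorem one_div_add_div_le_of_two_le {ℓ m₁ m₂ c : ℕ} (hc : 2 ≤ c) (h₂ : 2 ^ ℓ < c * 2 ^ m₂) :
    (1 : ℝ) / ↑(c * 2 ^ m₁) + (2 ^ ℓ + 1) / ↑(c * 2 ^ m₂) ≤ 1 + 1 / (2 ^ ℓ + 1) := by
  have hnum := Nat.two_pow_add_two_pow_le_mul hc h₂
  have hd₁ : 0 < c * 2 ^ m₁ := by positivity
  have hprod : c * 2 ^ m₂ ≤ 2 ^ m₂ * (c * 2 ^ m₁) := by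
    rw [mul_comm]; exact Nat.mul_le_mul_left _ (Nat.le_mul_of_pos_right c (Nat.two_pow_pos m₁))
  generalize c * 2 ^ m₁ = d₁ at *
  generalize c * 2 ^ m₂ = d₂ at *
  have hd₂ : (0 : ℝ) < d₂ := by exact_mod_cast Nat.zero_lt_of_lt h₂
  have hfirst : (1 : ℝ) / d₁ ≤ 2 ^ m₂ / d₂ := by
    rw [div_le_div_iff₀ (by positivity) hd₂, one_mul]
    exact_mod_cast hprod
  have hnum' : (2 : ℝ) ^ ℓ + 2 ^ m₂ ≤ d₂ := by exact_mod_cast hnum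
  have h₂' : (2 : ℝ) ^ ℓ + 1 ≤ d₂ := by exact_mod_cast h₂
  calc (1 : ℝ) / d₁ + (2 ^ ℓ + 1) / d₂ ≤ 2 ^ m₂ / d₂ + (2 ^ ℓ + 1) / d₂ := by gcongr
    _ = (2 ^ m₂ + 2 ^ ℓ + 1) / d₂ := by ring
    _ ≤ (d₂ + 1) / d₂ := div_le_div_of_nonneg_right (by linarith) hd₂.le
    _ = 1 + 1 / d₂ := by rw [add_div, div_self hd₂.ne']
    _ ≤ 1 + 1 / (2 ^ ℓ + 1) := by gcongr

theorem one_div_add_div_le {ℓ m₁ m₂ c : ℕ} (h₁ : 2 ≤ c * 2 ^ m₁) (h₂ : 2 ^ ℓ < c * 2 ^ m₂) :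
    (1 : ℝ) / ↑(c * 2 ^ m₁) + (2 ^ ℓ + 1) / ↑(c * 2 ^ m₂) ≤ 1 + 1 / (2 ^ ℓ + 1) := by
  obtain hc | hc := Nat.lt_or_ge c 2
  · interval_cases c
    · simp at h₁
    · simp only [one_mul] at h₁ h₂ ⊢
      push_cast
      exact one_div_two_pow_add_div_two_pow_le h₁ h₂
  · exact one_div_add_div_le_of_two_le hc h₂

theorem mem_Ds_of_two_le {a d : ℕ} (hd : d ∈ Ds a ∪ {1}) (h : 2 ≤ d) : d ∈ Ds a :=
  hd.resolve_right (by rintro rfl; omega)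

theorem tendsto_one_div_two_pow_add_one :
    Tendsto (fun n : ℕ => 1 / ((2 : ℝ) ^ n + 1)) atTop (𝓝 0) :=
  tendsto_const_nhds.div_atTop <|
    tendsto_atTop_add_const_right _ 1 (tendsto_pow_atTop_atTop_of_one_lt one_lt_two)

/-- Tightness instance for the 1/2 worst-case ratio: with `R₁(d)=1` and
`R₂(d)=(2^ℓ+1)·𝟙{d ≥ 2^ℓ+1}`, (i) the schedule pulling arm 2 every `2^ℓ+1` periods
achieves average reward `2 - 1/(2^ℓ+1)`; (ii) any PPP with both periods in
`D_a ∪ {1}` (finite, at least 2) has average reward at most `1 + 1/(2^ℓ+1)`;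
(iii) the resulting ratio tends to `1/2` as `ℓ → ∞`. -/
theorem stmt14 (ℓ : ℕ) :
    (((2 : ℝ) ^ ℓ + 1 + 2 ^ ℓ) / (2 ^ ℓ + 1) = 2 - 1 / (2 ^ ℓ + 1)) ∧
    (∀ a : ℕ, 1 ≤ a → ∀ d₁ d₂ : ℕ,
      d₁ ∈ Ds a ∪ {1} → d₂ ∈ Ds a ∪ {1} → 2 ≤ d₁ → 2 ≤ d₂ →
      (1 : ℝ) / d₁ + (if 2 ^ ℓ + 1 ≤ d₂ then ((2 : ℝ) ^ ℓ + 1) / d₂ else 0) ≤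
        1 + 1 / (2 ^ ℓ + 1)) ∧
    Filter.Tendsto
      (fun ℓ' : ℕ => (1 + 1 / ((2 : ℝ) ^ ℓ' + 1)) / (2 - 1 / ((2 : ℝ) ^ ℓ' + 1)))
      Filter.atTop (nhds (1 / 2)) := by
  refine ⟨by field_simp; ring, ?_, ?_⟩
  · intro a _ d₁ d₂ hd₁ hd₂ h₁ h₂
    obtain ⟨m₁, rfl⟩ := mem_Ds_of_two_le hd₁ h₁
    obtain ⟨m₂, rfl⟩ := mem_Ds_of_two_le hd₂ h₂
    split_ifs with h
    · exact one_div_add_div_le h₁ h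
    · have hfirst : (1 : ℝ) / ↑((2 * a - 1) * 2 ^ m₁) ≤ 1 :=
        div_le_one_of_le₀ (by exact_mod_cast h₁.trans' one_le_two) (Nat.cast_nonneg _)
      have htail : (0 : ℝ) ≤ 1 / (2 ^ ℓ + 1) := by positivity
      linarith
  · have h := tendsto_one_div_two_pow_add_one
    convert (h.const_add 1).div (h.const_sub 2) (by norm_num) using 2 <;> norm_num
end

section
/- Let u, v, w ≥ 0 and α ∈ [0,1]. Then max{ (3/4)u, (3/5)(αu + w), (3/5)(v + w) } ≥ (1/2)(αu + (1-α)v + w). -/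
/-- Key elementary inequality for the 1/2 worst-case ratio:
`max{(3/4)u, (3/5)(αu+w), (3/5)(v+w)} ≥ (1/2)(αu + (1-α)v + w)`. -/
theorem stmt15 (u v w α : ℝ) (hu : 0 ≤ u) (hv : 0 ≤ v) (hw : 0 ≤ w)
    (hα0 : 0 ≤ α) (hα1 : α ≤ 1) :
    (1 / 2) * (α * u + (1 - α) * v + w) ≤
      max ((3 / 4) * u) (max ((3 / 5) * (α * u + w)) ((3 / 5) * (v + w))) := by
  set M := max ((3 / 4) * u) (max ((3 / 5) * (α * u + w)) ((3 / 5) * (v + w))) with hM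
  have h1 : (3 / 4) * u ≤ M := le_max_left _ _
  have h2 : (3 / 5) * (α * u + w) ≤ M := le_trans (le_max_left _ _) (le_max_right _ _)
  have h3 : (3 / 5) * (v + w) ≤ M := le_trans (le_max_right _ _) (le_max_right _ _)
  have hMnn : 0 ≤ M := le_trans (by nlinarith) h1
  nlinarith [mul_nonneg hMnn (sq_nonneg (2*α - 1)), mul_le_mul_of_nonneg_left h1 (mul_nonneg hα0 (sub_nonneg.2 hα1)), mul_le_mul_of_nonneg_left h2 hα0, mul_le_mul_of_nonneg_left h3 (sub_nonneg.2 hα1)]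
end

section
/- Let N' ≥ 1 and let p_1 < p_2 < ... < p_{N'} be the N' smallest prime numbers that are at least N'. If N' = ⌊√(K/ln K)⌋ for an integer K ≥ 2, then p_i ≤ 2·√(K·ln K) for all i ∈ [N']; in particular p_{N'} is at most the 2N'-th smallest prime, and using the bound p_n ≤ n(ln n + ln ln n) for n ≥ 6, the claim follows. -/
/-!
If `p i` exceeded `m`, every prime in `[N', m]` would be one of `p 0, …, p (i - 1)`, so it
suffices to find `m ≤ 2 √(K log K)` with at least `N'` primes in `[N', m]`. From
`N'² log K ≤ K = exp (log K)` we get `N' log K ≤ √(K log K)` and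
`log K ≥ 2 log N' + log (2 log N')`, so any `m ≤ 2 N' (2 log N' + log (2 log N'))` will do.
For `N' ≥ 16` Chebyshev's lower bound `π y ≥ ((y - 1) log 2 - log (y + 2)) / log y`, together
with the trivial `π' N' ≤ (N' + 1) / 2`, supplies the primes; for `N' < 16` the choice
`m = 6 N' - 6` is checked directly.
-/

open Finset Real

theorem le_of_lt_card_filter_prime_Icc {p : ℕ → ℕ} {a m i : ℕ}
    (hp : ∀ q : ℕ, q.Prime → a ≤ q → q < p i → ∃ j < i, p j = q)
    (hcard : i < #{q ∈ Icc a m | q.Prime}) : p i ≤ m := by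
  by_contra! hm
  have hsub : {q ∈ Icc a m | q.Prime} ⊆ (range i).image p := by
    intro q hq
    simp only [mem_filter, mem_Icc] at hq
    obtain ⟨j, hj, rfl⟩ := hp q hq.2 hq.1.1 (hq.1.2.trans_lt hm)
    exact mem_image_of_mem p (mem_range.2 hj)
  have := (card_le_card hsub).trans card_image_le
  rw [card_range] at this
  omega

theorem Nat.primeCounting_le_primeCounting'_add_card (a m : ℕ) :
    Nat.primeCounting m ≤ Nat.primeCounting' a + #{q ∈ Icc a m | q.Prime} :=
  calc Nat.primeCounting m = #{q ∈ range (m + 1) | q.Prime} :=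
        (Nat.primesLE_card_eq_primeCounting m).symm
    _ ≤ #({q ∈ range a | q.Prime} ∪ {q ∈ Icc a m | q.Prime}) := by
      rw [← filter_union]
      exact card_le_card <| filter_subset_filter _ fun q => by
        simp only [mem_union, mem_range, mem_Icc]
        omega
    _ ≤ Nat.primeCounting' a + #{q ∈ Icc a m | q.Prime} :=
      (card_union_le _ _).trans_eq (by rw [← Nat.primesBelow_card_eq_primeCounting']; rfl)

theorem Nat.two_mul_primeCounting'_le (n : ℕ) : 2 * Nat.primeCounting' n ≤ n + 1 := by
  rcases le_or_gt n 2 with hn | hn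
  · rw [Nat.primeCounting'_eq_zero_iff.2 hn]
    omega
  · have := Nat.primeCounting'_add_le two_ne_zero (by norm_num : 2 < 3) (n - 3)
    rw [Nat.totient_two, show Nat.primeCounting' 3 = 1 by decide,
      show 3 + (n - 3) = n by omega] at this
    omega

theorem le_card_filter_prime_Icc_of_three_mul_add_one_le {n m : ℕ}
    (h : 3 * n + 1 ≤ 2 * Nat.primeCounting m) : n ≤ #{q ∈ Icc n m | q.Prime} := by
  have := Nat.primeCounting_le_primeCounting'_add_card n m
  have := Nat.two_mul_primeCounting'_le n
  omega

theorem one_lt_log_three : 1 < log 3 :=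
  (lt_log_iff_exp_lt (by norm_num)).2 (by linarith [exp_one_lt_d9])

theorem log_two_mul_le_self {t : ℝ} (ht : 0 < t) : log (2 * t) ≤ t := by
  rw [log_le_iff_le_exp (by positivity)]
  nlinarith [quadratic_le_exp_of_nonneg ht.le]

theorem log_two_mul_add_le {t s : ℝ} (ht : 0 < t) (hs : 0 ≤ s) (hst : s ≤ t) :
    log (2 * t + s) ≤ log (2 * t) + 1 / 2 := by
  have h := log_le_sub_one_of_pos (show 0 < (2 * t + s) / (2 * t) by positivity)
  rw [log_div (by positivity) (by positivity)] at h
  have : (2 * t + s) / (2 * t) - 1 ≤ 1 / 2 := by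
    rw [div_sub_one (by positivity), div_le_iff₀ (by positivity)]
    linarith
  linarith

theorem two_mul_log_add_log_two_mul_log_le {n x : ℝ} (hn : 1 < n) (hx : 1 ≤ x)
    (h : n ^ 2 * x ≤ exp x) : 2 * log n + log (2 * log n) ≤ x := by
  have hlog : 2 * log n + log x ≤ x := by
    have := log_le_log (by positivity) h
    rwa [log_exp, log_mul (by positivity) (by positivity), log_pow, Nat.cast_ofNat] at this
  have hx0 : 0 ≤ log x := log_nonneg hx
  have : log (2 * log n) ≤ log x := log_le_log (by have := log_pos hn; positivity) (by linarith)
  linarith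

theorem three_le_two_mul_log_add_log_two_mul_log {x : ℝ} (hx : 4 ≤ x) :
    3 ≤ 2 * log x + log (2 * log x) := by
  have ht : 4 * log 2 ≤ 2 * log x := by
    have := log_le_log (by norm_num) hx
    rw [show (4 : ℝ) = 2 ^ 2 by norm_num, log_pow] at this
    push_cast at this
    linarith
  have hlog2 := log_two_gt_d9
  have hinv := inv_anti₀ (by norm_num) (show (2.77 : ℝ) ≤ 2 * log x by linarith)
  have := one_sub_inv_le_log_of_pos (show 0 < 2 * log x by linarith)
  linarith [show (2.77 : ℝ)⁻¹ ≤ 0.37 by norm_num]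

theorem six_mul_sub_six_le {n : ℕ} (hn : 2 ≤ n) :
    6 * (n : ℝ) - 6 ≤ 2 * n * (2 * log n + log (2 * log n)) := by
  have hlog2 := log_two_gt_d9
  obtain rfl | rfl | hn4 : n = 2 ∨ n = 3 ∨ 4 ≤ n := by omega
  · have hinv := inv_anti₀ (by norm_num) (show (1.38 : ℝ) ≤ 2 * log 2 by linarith)
    have := one_sub_inv_le_log_of_pos (show 0 < 2 * log 2 by linarith)
    norm_num
    linarith [show (1.38 : ℝ)⁻¹ ≤ 0.73 by norm_num]
  · have := log_nonneg (show 1 ≤ 2 * log 3 by linarith [one_lt_log_three])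
    norm_num
    linarith [one_lt_log_three]
  · have hn' : (4 : ℝ) ≤ n := by exact_mod_cast hn4
    nlinarith [three_le_two_mul_log_add_log_two_mul_log hn']

theorem sq_mul_le_of_le_sqrt_div {a b c : ℝ} (ha : 0 ≤ a) (hb : 0 ≤ b) (hc : 0 < c)
    (h : a ≤ √(b / c)) : a ^ 2 * c ≤ b := by
  rwa [le_sqrt ha (by positivity), le_div_iff₀ hc] at h

theorem mul_le_sqrt_mul_of_le_sqrt_div {a b c : ℝ} (ha : 0 ≤ a) (hb : 0 ≤ b) (hc : 0 < c)
    (h : a ≤ √(b / c)) : a * c ≤ √(b * c) := by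
  rw [le_sqrt (by positivity) (by positivity)]
  nlinarith [sq_mul_le_of_le_sqrt_div ha hb hc h]

theorem three_mul_add_one_le_two_mul_primeCounting {n : ℕ} (hn : 16 ≤ n) :
    3 * n + 1 ≤ 2 * Nat.primeCounting ⌊2 * n * (2 * log n + log (2 * log n))⌋₊ := by
  set t := log n
  set s := log (2 * t)
  set y := 2 * n * (2 * t + s)
  have hlog2 := log_two_gt_d9
  have hlog2' := log_two_lt_d9
  have hn' : (16 : ℝ) ≤ n := by exact_mod_cast hn
  have ht : 4 * log 2 ≤ t := by
    calc 4 * log 2 = log 16 := by rw [show (16 : ℝ) = 2 ^ 4 by norm_num, log_pow]; norm_num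
      _ ≤ t := log_le_log (by norm_num) hn'
  have ht0 : 0 < t := by linarith
  have hs : 0 ≤ s := log_nonneg (by linarith)
  have hst : s ≤ t := log_two_mul_le_self ht0
  have hy : 2 ≤ y := by nlinarith
  have hy1 : 1 < y := by linarith
  have hlogy : log y ≤ log 2 + t + s + 1 / 2 := by
    rw [log_mul (by positivity) (by positivity), log_mul (by norm_num) (by positivity)]
    linarith [log_two_mul_add_le ht0 hs hst]
  have hlogy2 : log (y + 2) ≤ log 2 + log y := by
    rw [← log_mul (by norm_num) (by positivity)]
    exact log_le_log (by positivity) (by linarith)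
  have hnt := mul_nonneg (sub_nonneg.2 hn') (sub_nonneg.2 ht)
  have hns := mul_nonneg (show (0 : ℝ) ≤ n by positivity) (sub_nonneg.2 hst)
  have hy2 : y * 0.6931 ≤ y * log 2 := by gcongr; linarith
  have key : ((3 * n + 1 : ℕ) : ℝ) / 2 ≤ ((y - 1) * log 2 - log (y + 2)) / log y := by
    rw [le_div_iff₀ (log_pos hy1)]
    push_cast
    nlinarith
  have := key.trans (Chebyshev.pi_ge' hy1)
  exact_mod_cast (by linarith : ((3 * n + 1 : ℕ) : ℝ) ≤ 2 * Nat.primeCounting ⌊y⌋₊)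

theorem le_card_filter_prime_Icc_six_mul_sub_six :
    ∀ n ∈ Icc 2 15, n ≤ #{q ∈ Icc n (6 * n - 6) | q.Prime} := by
  decide

theorem exists_le_card_filter_prime_Icc {n : ℕ} (hn : 2 ≤ n) :
    ∃ m : ℕ, (m : ℝ) ≤ 2 * n * (2 * log n + log (2 * log n)) ∧
      n ≤ #{q ∈ Icc n m | q.Prime} := by
  rcases lt_or_ge n 16 with hn16 | hn16
  · refine ⟨6 * n - 6, ?_,
      le_card_filter_prime_Icc_six_mul_sub_six n (mem_Icc.2 ⟨hn, by omega⟩)⟩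
    rw [Nat.cast_sub (by omega)]
    push_cast
    exact six_mul_sub_six_le hn
  · refine ⟨_, Nat.floor_le ?_, le_card_filter_prime_Icc_of_three_mul_add_one_le
      (three_mul_add_one_le_two_mul_primeCounting hn16)⟩
    have := three_le_two_mul_log_add_log_two_mul_log
      (show (4 : ℝ) ≤ n by exact_mod_cast (by omega : 4 ≤ n))
    positivity

theorem one_le_log_of_four_mul_log_le {K : ℕ} (hK : 2 ≤ K) (h : 4 * log K ≤ K) :
    1 ≤ log K := by
  have hlog : log 2 ≤ log K := log_le_log (by norm_num) (by exact_mod_cast hK)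
  have hK3 : 3 ≤ K := by
    have : (2 : ℝ) < K := by linarith [log_two_gt_d9]
    exact_mod_cast this
  calc 1 ≤ log 3 := one_lt_log_three.le
    _ ≤ log K := log_le_log (by norm_num) (by exact_mod_cast hK3)

theorem stmt18_general (K : ℕ) (hK : 2 ≤ K) (N' : ℕ)
    (hN' : N' = ⌊Real.sqrt ((K : ℝ) / Real.log K)⌋₊)
    (p : ℕ → ℕ)
    (hsmallest : ∀ q : ℕ, q.Prime → N' ≤ q → ∀ i < N', q < p i → ∃ j < i, p j = q) :
    ∀ i < N', (p i : ℝ) ≤ 2 * Real.sqrt ((K : ℝ) * Real.log K) := by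
  intro i hi
  have hK' : (2 : ℝ) ≤ K := by exact_mod_cast hK
  have hlogK : log 2 ≤ log K := log_le_log (by norm_num) hK'
  have hlog2 := log_two_gt_d9
  have hN : (N' : ℝ) ≤ √(K / log K) := hN' ▸ Nat.floor_le (sqrt_nonneg _)
  have hp (m : ℕ) (hm : i < #{q ∈ Icc N' m | q.Prime}) : (p i : ℝ) ≤ m := by
    exact_mod_cast le_of_lt_card_filter_prime_Icc (fun q hq hq' ↦ hsmallest q hq hq' i hi) hm
  obtain rfl | hN2 : N' = 1 ∨ 2 ≤ N' := by omega
  · have : #{q ∈ Icc 1 2 | q.Prime} = 1 := by decide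
    refine (hp 2 (by omega)).trans ?_
    have : 1 ≤ √(K * log K) := one_le_sqrt.2 (by nlinarith)
    push_cast
    linarith
  have hN2' : (2 : ℝ) ≤ N' := by exact_mod_cast hN2
  have hsq := sq_mul_le_of_le_sqrt_div (Nat.cast_nonneg _) (Nat.cast_nonneg _) (by linarith) hN
  have h4 : 4 * log K ≤ (N' : ℝ) ^ 2 * log K := by gcongr; nlinarith
  have hx := one_le_log_of_four_mul_log_le hK (h4.trans hsq)
  have hL := two_mul_log_add_log_two_mul_log_le (n := N') (by linarith) hx
    (by rwa [exp_log (by linarith)])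
  obtain ⟨m, hm, hcard⟩ := exists_le_card_filter_prime_Icc hN2
  calc (p i : ℝ) ≤ m := hp m (by omega)
    _ ≤ 2 * N' * (2 * log N' + log (2 * log N')) := hm
    _ ≤ 2 * (N' * log K) := by nlinarith
    _ ≤ 2 * √(K * log K) := by
      gcongr
      exact mul_le_sqrt_mul_of_le_sqrt_div (Nat.cast_nonneg _) (Nat.cast_nonneg _) (by linarith) hN

/-- If `N' = ⌊√(K/ln K)⌋` and `p 0 < p 1 < ⋯ < p (N'-1)` are the `N'` smallest primes
that are at least `N'`, then every `p i ≤ 2√(K ln K)`. -/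
theorem stmt18 (K : ℕ) (hK : 2 ≤ K) (N' : ℕ)
    (hN' : N' = ⌊Real.sqrt ((K : ℝ) / Real.log K)⌋₊) (hN1 : 1 ≤ N')
    (p : ℕ → ℕ)
    (hprime : ∀ i < N', (p i).Prime)
    (hge : ∀ i < N', N' ≤ p i)
    (hinc : ∀ i j : ℕ, i < j → j < N' → p i < p j)
    (hsmallest : ∀ q : ℕ, q.Prime → N' ≤ q → ∀ i < N', q < p i → ∃ j < i, p j = q) :
    ∀ i < N', (p i : ℝ) ≤ 2 * Real.sqrt ((K : ℝ) * Real.log K) :=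
  stmt18_general K hK N' hN' p hsmallest
end
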